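/- For a convex body K ⊆ ℝ^n, the inradius of the Minkowski symmetral K* = (1/2)(K − K) satisfies inrad(K*) ≤ ((n+1)/2)·inrad(K). -/

import Mathlib

/-!
Let `h` be the support function of `K`. The symmetral `K* = ½(K − K)` has support function
`u ↦ ½(h u + h (-u))`, so it has the same width as `K` in every direction, and a ball of radius
`ρ` inside `K*` forces every width to be at least `2ρ`; hence `inrad K* ≤ ½ · minWidth K`.

It remains to prove Steinhagen's inequality `minWidth K ≤ (n + 1) · inrad K`. Let `B(c, r)` be
a largest inscribed ball. The outer normals along which `B` (almost) touches `∂K` have `0` in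
their convex hull, since otherwise moving `c` against them would make room for a larger ball.
By Carathéodory, `0 = ∑ wᵢ uᵢ` with at most `n + 1` such normals `uᵢ`; for the heaviest one,
`w_j ≥ 1 / (n + 1)`, and for `x ∈ K` the bounds `⟪x - c, uᵢ⟫ ≤ r` give
`⟪x - c, -u_j⟫ ≤ (1 / w_j - 1) r ≤ n r`, so the width of `K` along `u_j` is at most `(n + 1) r`.
The argument is run with normals that touch only up to `ε`, which spares a continuity argument
for `h`.
-/

open RealInnerProductSpace Pointwise

def IsConvexBody {m : ℕ} (K : Set (EuclideanSpace ℝ (Fin m))) : Prop :=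
  IsCompact K ∧ Convex ℝ K ∧ (interior K).Nonempty

noncomputable def suppFn {m : ℕ} (S : Set (EuclideanSpace ℝ (Fin m)))
    (u : EuclideanSpace ℝ (Fin m)) : ℝ :=
  sSup ((fun x => ⟪x, u⟫) '' S)

noncomputable def minWidth {m : ℕ} (S : Set (EuclideanSpace ℝ (Fin m))) : ℝ :=
  ⨅ u : {u : EuclideanSpace ℝ (Fin m) // ‖u‖ = 1},
    (suppFn S u + suppFn S (-(u : EuclideanSpace ℝ (Fin m))))

noncomputable def inrad {m : ℕ} (L : Set (EuclideanSpace ℝ (Fin m))) : ℝ :=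
  sSup {r : ℝ | ∃ c, Metric.closedBall c r ⊆ L}

open Metric Set

theorem exists_inner_lt_lt_inner_of_notMem {E : Type*} [NormedAddCommGroup E]
    [InnerProductSpace ℝ E] [CompleteSpace E] {s : Set E} (hs : Convex ℝ s) (hsc : IsClosed s)
    {x : E} (hx : x ∉ s) : ∃ v : E, ∃ a : ℝ, (∀ y ∈ s, ⟪y, v⟫ < a) ∧ a < ⟪x, v⟫ := by
  obtain ⟨f, a, hfs, hfx⟩ := geometric_hahn_banach_closed_point hs hsc hx
  have hf : ∀ y, f y = ⟪y, (InnerProductSpace.toDual ℝ E).symm f⟫ := fun y => by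
    rw [real_inner_comm, InnerProductSpace.toDual_symm_apply]
  exact ⟨_, a, fun y hy => hf y ▸ hfs y hy, hf x ▸ hfx⟩

section SupportFunction

variable {m : ℕ} {K : Set (EuclideanSpace ℝ (Fin m))}

theorem le_suppFn (hK : IsCompact K) {x : EuclideanSpace ℝ (Fin m)} (hx : x ∈ K)
    (u : EuclideanSpace ℝ (Fin m)) : ⟪x, u⟫ ≤ suppFn K u :=
  le_csSup (hK.image (continuous_id.inner continuous_const)).bddAbove (mem_image_of_mem _ hx)

theorem suppFn_le (hne : K.Nonempty) {u : EuclideanSpace ℝ (Fin m)} {a : ℝ}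
    (h : ∀ x ∈ K, ⟪x, u⟫ ≤ a) : suppFn K u ≤ a :=
  csSup_le (hne.image _) (forall_mem_image.2 h)

theorem exists_inner_eq_suppFn (hK : IsCompact K) (hne : K.Nonempty)
    (u : EuclideanSpace ℝ (Fin m)) : ∃ x ∈ K, ⟪x, u⟫ = suppFn K u := by
  obtain ⟨x, hx, hmax⟩ :=
    hK.exists_isMaxOn hne (continuous_id.inner (𝕜 := ℝ) continuous_const).continuousOn
  exact ⟨x, hx, le_antisymm (le_suppFn hK hx u) (suppFn_le hne hmax)⟩

theorem suppFn_add_suppFn_neg_nonneg (hK : IsCompact K) (hne : K.Nonempty)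
    (u : EuclideanSpace ℝ (Fin m)) : 0 ≤ suppFn K u + suppFn K (-u) := by
  obtain ⟨x, hx⟩ := hne
  have := add_le_add (le_suppFn hK hx u) (le_suppFn hK hx (-u))
  rwa [inner_neg_right, add_neg_cancel] at this

theorem minWidth_le (hK : IsCompact K) (hne : K.Nonempty) {u : EuclideanSpace ℝ (Fin m)}
    (hu : ‖u‖ = 1) : minWidth K ≤ suppFn K u + suppFn K (-u) :=
  ciInf_le (f := fun u : {u : EuclideanSpace ℝ (Fin m) // ‖u‖ = 1} => suppFn K u + suppFn K (-u))
    ⟨0, forall_mem_range.2 fun u => suppFn_add_suppFn_neg_nonneg hK hne u⟩ ⟨u, hu⟩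

theorem inner_add_le_suppFn_of_closedBall_subset (hK : IsCompact K)
    {c : EuclideanSpace ℝ (Fin m)} {s : ℝ} (hs : 0 ≤ s) (hball : closedBall c s ⊆ K)
    {u : EuclideanSpace ℝ (Fin m)} (hu : ‖u‖ = 1) : ⟪c, u⟫ + s ≤ suppFn K u := by
  have hmem : c + s • u ∈ K := hball (by simp [norm_smul, hu, abs_of_nonneg hs])
  simpa [inner_add_left, real_inner_smul_left, real_inner_self_eq_norm_sq, hu]
    using le_suppFn hK hmem u

theorem closedBall_subset_of_forall_inner_add_le_suppFn (hKc : IsClosed K)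
    (hKconv : Convex ℝ K) (hne : K.Nonempty) {c : EuclideanSpace ℝ (Fin m)} {s : ℝ}
    (h : ∀ u, ‖u‖ = 1 → ⟪c, u⟫ + s ≤ suppFn K u) : closedBall c s ⊆ K := by
  intro x hx
  by_contra hxK
  obtain ⟨v, a, hKv, hxv⟩ := exists_inner_lt_lt_inner_of_notMem hKconv hKc hxK
  have hv : 0 < ‖v‖ := by
    refine norm_pos_iff.2 fun hv0 => ?_
    obtain ⟨y, hy⟩ := hne
    have := hKv y hy
    simp only [hv0, inner_zero_right] at this hxv
    linarith
  set u := ‖v‖⁻¹ • v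
  have hu : ‖u‖ = 1 := by rw [norm_smul, norm_inv, norm_norm, inv_mul_cancel₀ hv.ne']
  have hinner : ∀ y, ⟪y, u⟫ = ⟪y, v⟫ / ‖v‖ := fun y => by
    rw [real_inner_smul_right, inv_mul_eq_div]
  have hsupp : suppFn K u ≤ a / ‖v‖ :=
    suppFn_le hne fun y hy => by rw [hinner]; gcongr; exact (hKv y hy).le
  have hxc : ⟪x - c, u⟫ ≤ s := by
    calc ⟪x - c, u⟫ ≤ ‖x - c‖ * ‖u‖ := real_inner_le_norm _ _
      _ ≤ s := by rw [hu, mul_one, ← dist_eq_norm]; exact hx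
  have hxa : a / ‖v‖ < ⟪x, u⟫ := by rw [hinner]; gcongr
  rw [inner_sub_left] at hxc
  linarith [h u hu]

end SupportFunction

universe u

theorem exists_pos_convex_span_with_weight_ge {E : Type u} [AddCommGroup E] [Module ℝ E]
    [FiniteDimensional ℝ E] {S : Set E} {p : E} (hp : p ∈ convexHull ℝ S) :
    ∃ (ι : Type u) (_ : Fintype ι) (z : ι → E) (w : ι → ℝ) (j : ι), range z ⊆ S ∧
      (∀ i, 0 < w i) ∧ ∑ i, w i = 1 ∧ ∑ i, w i • z i = p ∧
      1 ≤ (Module.finrank ℝ E + 1) * w j := by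
  obtain ⟨ι, _, z, w, hzS, hind, hw0, hw1, hwp⟩ := eq_pos_convex_span_of_mem_convexHull hp
  have hcard : (Fintype.card ι : ℝ) ≤ Module.finrank ℝ E + 1 := by
    exact_mod_cast hind.card_le_finrank_succ.trans
      (Nat.add_le_add_right (Submodule.finrank_le (vectorSpan ℝ (range z))) 1)
  obtain ⟨j, -, hj⟩ := Finset.exists_le_of_sum_le (f := fun _ => 1 / (Fintype.card ι : ℝ))
    (g := w) (Finset.nonempty_of_sum_ne_zero (hw1 ▸ one_ne_zero)) (by simp [hw1, mul_inv_le_one])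
  have hι : (0 : ℝ) < Fintype.card ι := by exact_mod_cast Fintype.card_pos_iff.2 ⟨j⟩
  rw [div_le_iff₀' hι] at hj
  exact ⟨ι, _, z, w, j, hzS, hw0, hw1, hwp, by nlinarith [hw0 j]⟩

section MinkowskiSymmetral

variable {m : ℕ} {K : Set (EuclideanSpace ℝ (Fin m))}

theorem suppFn_half_smul_add_neg (hK : IsCompact K) (hne : K.Nonempty)
    (u : EuclideanSpace ℝ (Fin m)) :
    suppFn ((1 / 2 : ℝ) • (K + -K)) u = (suppFn K u + suppFn K (-u)) / 2 := by
  have hsymm : IsCompact ((1 / 2 : ℝ) • (K + -K)) := (hK.add hK.neg).smul _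
  have hinner : ∀ a b : EuclideanSpace ℝ (Fin m),
      ⟪(1 / 2 : ℝ) • (a + b), u⟫ = (⟪a, u⟫ + ⟪-b, -u⟫) / 2 := fun a b => by
    rw [real_inner_smul_left, inner_add_left, inner_neg_neg]; ring
  apply le_antisymm
  · refine suppFn_le (hne.add hne.neg).smul_set ?_
    rintro _ ⟨_, ⟨a, ha, _, hb, rfl⟩, rfl⟩
    rw [hinner]
    have := add_le_add (le_suppFn hK ha u) (le_suppFn hK (mem_neg.1 hb) (-u))
    linarith
  · obtain ⟨a, ha, hau⟩ := exists_inner_eq_suppFn hK hne u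
    obtain ⟨b, hb, hbu⟩ := exists_inner_eq_suppFn hK hne (-u)
    have := le_suppFn hsymm (smul_mem_smul_set (add_mem_add ha (neg_mem_neg.2 hb))) u
    rwa [hinner, neg_neg, hau, hbu] at this

theorem minWidth_half_smul_add_neg (hK : IsCompact K) (hne : K.Nonempty) :
    minWidth ((1 / 2 : ℝ) • (K + -K)) = minWidth K := by
  unfold minWidth
  congr! 2 with u
  rw [suppFn_half_smul_add_neg hK hne, suppFn_half_smul_add_neg hK hne, neg_neg]
  ring

end MinkowskiSymmetral

section Inradius

variable {m : ℕ} {K : Set (EuclideanSpace ℝ (Fin m))}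

theorem isGreatest_inradii (hm : 0 < m) (hK : IsCompact K) (hne : K.Nonempty) :
    IsGreatest {s | ∃ c, closedBall c s ⊆ K} (inrad K) := by
  have : NeZero m := ⟨hm.ne'⟩
  have hcompl : Kᶜ.Nonempty := nonempty_compl.2 hK.ne_univ
  obtain ⟨c₀, hc₀, hmax⟩ := hK.exists_isMaxOn hne (continuous_infDist_pt Kᶜ).continuousOn
  suffices h : IsGreatest {s | ∃ c, closedBall c s ⊆ K} (infDist c₀ Kᶜ) by
    rwa [inrad, h.csSup_eq]
  refine ⟨⟨c₀,
    (closedBall_infDist_compl_subset_closure hc₀).trans hK.isClosed.closure_subset⟩, ?_⟩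
  rintro s ⟨c, hball⟩
  rcases lt_or_ge s 0 with hs | hs
  · exact hs.le.trans infDist_nonneg
  have hc : c ∈ K := hball (mem_closedBall_self hs)
  have : s ≤ infDist c Kᶜ := (le_infDist hcompl).2 fun y hy =>
    (not_le.1 fun hyc => hy (hball (mem_closedBall'.2 hyc))).le
  exact this.trans (hmax hc)

theorem inrad_nonneg (hm : 0 < m) (hK : IsCompact K) (hne : K.Nonempty) : 0 ≤ inrad K := by
  obtain ⟨x, hx⟩ := hne
  exact (isGreatest_inradii hm hK ⟨x, hx⟩).2 ⟨x, by rwa [closedBall_zero, singleton_subset_iff]⟩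

theorem inrad_le_half_minWidth (hm : 0 < m) (hK : IsCompact K) (hne : K.Nonempty) :
    inrad K ≤ minWidth K / 2 := by
  obtain ⟨c, hball⟩ := (isGreatest_inradii hm hK hne).1
  have : NeZero m := ⟨hm.ne'⟩
  obtain ⟨u, hu⟩ := exists_norm_eq (EuclideanSpace ℝ (Fin m)) zero_le_one
  have : Nonempty {u : EuclideanSpace ℝ (Fin m) // ‖u‖ = 1} := ⟨⟨u, hu⟩⟩
  suffices 2 * inrad K ≤ minWidth K by linarith
  refine le_ciInf fun u => ?_
  have hr := inrad_nonneg hm hK hne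
  have h₁ := inner_add_le_suppFn_of_closedBall_subset hK hr hball u.2
  have h₂ := inner_add_le_suppFn_of_closedBall_subset hK hr hball (u := -u) (by simp [u.2])
  rw [inner_neg_right] at h₂
  linarith

theorem inrad_eq_zero_of_fin_zero {L : Set (EuclideanSpace ℝ (Fin 0))} (hL : L.Nonempty) :
    inrad L = 0 := by
  obtain ⟨x, hx⟩ := hL
  have : {s | ∃ c, closedBall c s ⊆ L} = univ :=
    eq_univ_of_forall fun s => ⟨x, fun y _ => Subsingleton.elim x y ▸ hx⟩
  rw [inrad, this, Real.sSup_univ]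

end Inradius

section Steinhagen

variable {m : ℕ} {K : Set (EuclideanSpace ℝ (Fin m))}

def contactNormals (K : Set (EuclideanSpace ℝ (Fin m))) (c : EuclideanSpace ℝ (Fin m))
    (r ε : ℝ) : Set (EuclideanSpace ℝ (Fin m)) :=
  {u | ‖u‖ = 1 ∧ suppFn K u ≤ ⟪c, u⟫ + r + ε}

theorem zero_mem_closure_convexHull_contactNormals (hK : IsCompact K) (hKconv : Convex ℝ K)
    (hne : K.Nonempty) {c : EuclideanSpace ℝ (Fin m)} {r : ℝ} (hr : 0 ≤ r)
    (hball : closedBall c r ⊆ K) (hmax : ∀ c' s, closedBall c' s ⊆ K → s ≤ r)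
    {ε : ℝ} (hε : 0 < ε) : 0 ∈ closure (convexHull ℝ (contactNormals K c r ε)) := by
  by_contra h0
  obtain ⟨v, a, hv, ha⟩ :=
    exists_inner_lt_lt_inner_of_notMem (convex_convexHull ℝ _).closure isClosed_closure h0
  rw [inner_zero_left] at ha
  set t := ε / (‖v‖ - a)
  have ht : 0 < t := div_pos hε (by linarith [norm_nonneg v])
  have hbigger : closedBall (c + t • v) (r - t * a) ⊆ K := by
    refine closedBall_subset_of_forall_inner_add_le_suppFn hK.isClosed hKconv hne fun u hu => ?_
    have hcu := inner_add_le_suppFn_of_closedBall_subset hK hr hball hu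
    rw [inner_add_left, real_inner_smul_left, real_inner_comm u v]
    by_cases hN : u ∈ contactNormals K c r ε
    · have := hv u (subset_closure (subset_convexHull ℝ _ hN))
      nlinarith
    · have hgap : ⟪c, u⟫ + r + ε < suppFn K u := not_le.1 fun h => hN ⟨hu, h⟩
      have hvu : ⟪u, v⟫ ≤ ‖v‖ := by simpa [hu] using real_inner_le_norm u v
      have : t * (‖v‖ - a) = ε := div_mul_cancel₀ _ (by linarith [norm_nonneg v])
      nlinarith
  linarith [hmax _ _ hbigger, mul_neg_of_pos_of_neg ht ha]

theorem exists_width_le_of_zero_mem_closure_convexHull (hK : IsCompact K)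
    {c : EuclideanSpace ℝ (Fin m)} (hc : c ∈ K) {r ε : ℝ} (hε : 0 < ε)
    (h0 : 0 ∈ closure (convexHull ℝ (contactNormals K c r ε))) :
    ∃ u, ‖u‖ = 1 ∧ suppFn K u + suppFn K (-u) ≤ (m + 1) * (r + (1 + diam K) * ε) := by
  obtain ⟨p, hp, hpε⟩ := mem_closure_iff.1 h0 ε hε
  rw [dist_zero_left] at hpε
  obtain ⟨ι, _, z, w, j, hzN, hw0, hw1, hwp, hwj⟩ := exists_pos_convex_span_with_weight_ge hp
  rw [finrank_euclideanSpace_fin] at hwj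
  obtain ⟨hzj, hzj_supp⟩ := hzN ⟨j, rfl⟩
  refine ⟨z j, hzj, ?_⟩
  set s := r + ε
  suffices suppFn K (-z j) ≤ ⟪c, -z j⟫ + (m + 1) * (s + diam K * ε) - s by
    rw [inner_neg_right] at this
    linarith
  refine suppFn_le ⟨c, hc⟩ fun x hx => ?_
  have hle : ∀ i, ⟪x - c, z i⟫ ≤ s := fun i => by
    rw [inner_sub_left]
    linarith [le_suppFn hK hx (z i), (hzN ⟨i, rfl⟩).2]
  have hsum : -(diam K * ε) ≤ ∑ i, w i * ⟪x - c, z i⟫ := by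
    have hxc : ‖x - c‖ ≤ diam K := dist_eq_norm x c ▸ dist_le_diam_of_mem hK.isBounded hx hc
    calc -(diam K * ε) ≤ -(‖x - c‖ * ‖p‖) := by gcongr
      _ ≤ ⟪x - c, p⟫ := neg_le_of_abs_le (abs_real_inner_le_norm _ _)
      _ = ∑ i, w i * ⟪x - c, z i⟫ := by simp only [← hwp, inner_sum, real_inner_smul_right]
  have hj_gap : w j * (s - ⟪x - c, z j⟫) ≤ s + diam K * ε :=
    calc w j * (s - ⟪x - c, z j⟫) ≤ ∑ i, w i * (s - ⟪x - c, z i⟫) :=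
          Finset.single_le_sum (fun i _ => mul_nonneg (hw0 i).le (sub_nonneg.2 (hle i)))
            (Finset.mem_univ j)
      _ = s - ∑ i, w i * ⟪x - c, z i⟫ := by
          simp only [mul_sub, Finset.sum_sub_distrib, ← Finset.sum_mul, hw1, one_mul]
      _ ≤ s + diam K * ε := by linarith
  have hgap : s - ⟪x - c, z j⟫ ≤ (m + 1) * (s + diam K * ε) := by
    nlinarith [sub_nonneg.2 (hle j)]
  rw [inner_sub_left] at hgap
  rw [inner_neg_right, inner_neg_right]
  linarith

theorem minWidth_le_succ_mul_inrad (hm : 0 < m) (hK : IsCompact K) (hKconv : Convex ℝ K)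
    (hne : K.Nonempty) : minWidth K ≤ (m + 1) * inrad K := by
  obtain ⟨⟨c, hball⟩, hmax⟩ := isGreatest_inradii hm hK hne
  have hr := inrad_nonneg hm hK hne
  have hc : c ∈ K := hball (mem_closedBall_self hr)
  refine le_of_forall_pos_le_add fun δ hδ => ?_
  have hD : 0 < (m + 1) * (1 + diam K) := by positivity
  obtain ⟨u, hu, hwidth⟩ := exists_width_le_of_zero_mem_closure_convexHull hK hc
    (div_pos hδ hD) (zero_mem_closure_convexHull_contactNormals hK hKconv hne hr hball
      (fun c' s h => hmax ⟨c', h⟩) (div_pos hδ hD))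
  calc minWidth K ≤ suppFn K u + suppFn K (-u) := minWidth_le hK hne hu
    _ ≤ (m + 1) * (inrad K + (1 + diam K) * (δ / ((m + 1) * (1 + diam K)))) := hwidth
    _ = (m + 1) * inrad K + δ := by field_simp

end Steinhagen

/-- The inradius of the Minkowski symmetral `K* = (1/2)(K − K)` is at most `((n+1)/2)·inrad(K)`. -/
theorem stmt7 {n : ℕ} (K : Set (EuclideanSpace ℝ (Fin n))) (hK : IsConvexBody K) :
    inrad ((1 / 2 : ℝ) • (K + -K)) ≤ ((n + 1 : ℝ) / 2) * inrad K := by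
  obtain ⟨hKc, hKconv, hKint⟩ := hK
  have hne : K.Nonempty := hKint.mono interior_subset
  have hsymm_ne : ((1 / 2 : ℝ) • (K + -K)).Nonempty := (hne.add hne.neg).smul_set
  rcases n.eq_zero_or_pos with rfl | hn
  · rw [inrad_eq_zero_of_fin_zero hne, inrad_eq_zero_of_fin_zero hsymm_ne, mul_zero]
  calc inrad ((1 / 2 : ℝ) • (K + -K))
      ≤ minWidth ((1 / 2 : ℝ) • (K + -K)) / 2 :=
        inrad_le_half_minWidth hn ((hKc.add hKc.neg).smul _) hsymm_ne
    _ = minWidth K / 2 := by rw [minWidth_half_smul_add_neg hKc hne]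
    _ ≤ ((n + 1 : ℝ) / 2) * inrad K := by
        linarith [minWidth_le_succ_mul_inrad hn hKc hKconv hne]
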